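/- arXiv:1311.3822 — 5 statements merged into one kernel-verified Lean document; each statement's English description precedes it below -/
import Mathlib

section
/- Let A ⊆ B(H) be an operator algebra such that the infinite amplification H^(∞) = H ⊗ ℓ² has the reduction property as an A-module. Then there exists a constant K ≥ 1 such that every closed A-submodule V ⊆ H is the range of a bounded module projection p ∈ A′ (the commutant of A) with ‖p‖ ≤ K. -/
/-!
Suppose the projection constants were unbounded, and pick closed invariant subspaces `Vₙ` of `H`
admitting no module projection of norm `≤ n + 1`. Their `ℓ²`-sum `𝒱` is a closed invariant
subspace of `H^(∞)`, so the reduction property gives a closed invariant complement `W`. The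
projection `P` onto `𝒱` along `W` is bounded by the closed graph theorem and commutes with the
amplified action, because both its range and kernel are invariant. Compressing `P` to the `n`-th
coordinate gives a module projection onto `Vₙ` of norm at most `‖P‖`, which is absurd once
`n ≥ ‖P‖`.
-/

open scoped ENNReal

noncomputable section

namespace Submodule

variable {R M : Type*} [Ring R] [TopologicalSpace M] [AddCommGroup M] [Module R M]
  {p q : Submodule R M}

theorem isProj_projectionL (h : IsTopCompl p q) : LinearMap.IsProj p (p.projectionL q h) :=
  ⟨projectionL_apply_mem h, fun x hx => (projectionL_eq_self_iff h x).2 hx⟩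

theorem commute_projectionL_of_mem_invtSubmodule (h : IsTopCompl p q) {T : M →ₗ[R] M}
    (hp : p ∈ Module.End.invtSubmodule T) (hq : q ∈ Module.End.invtSubmodule T) :
    Commute (p.projectionL q h : M →ₗ[R] M) T := by
  rw [toLinearMap_projectionL]
  refine (LinearMap.IsIdempotentElem.commute_iff (isIdempotentElem_projection h.isCompl)).2 ?_
  rw [range_projection, ker_projection]
  exact ⟨hp, hq⟩

end Submodule

namespace lp

variable {𝕜 ι : Type*} [NontriviallyNormedField 𝕜] {p : ℝ≥0∞}

section Family

variable {E : ι → Type*} [∀ i, NormedAddCommGroup (E i)] [∀ i, NormedSpace 𝕜 (E i)]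

def piSubmodule (p : ℝ≥0∞) (V : ∀ i, Submodule 𝕜 (E i)) : Submodule 𝕜 (lp E p) :=
  ⨅ i, (V i).comap (evalₗ E p i)

variable {V : ∀ i, Submodule 𝕜 (E i)}

@[simp]
theorem mem_piSubmodule {ξ : lp E p} : ξ ∈ piSubmodule p V ↔ ∀ i, ξ i ∈ V i := by
  simp [piSubmodule]

theorem isClosed_piSubmodule [Fact (1 ≤ p)] (hV : ∀ i, IsClosed (V i : Set (E i))) :
    IsClosed (piSubmodule p V : Set (lp E p)) := by
  simp only [piSubmodule, Submodule.coe_iInf, Submodule.comap_coe]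
  exact isClosed_iInter fun i => (hV i).preimage (lipschitzWith_one_eval p i).continuous

variable [DecidableEq ι]

theorem single_mem_piSubmodule {i : ι} {x : E i} (hx : x ∈ V i) :
    lp.single p i x ∈ piSubmodule p V := by
  refine mem_piSubmodule.2 fun j => ?_
  obtain rfl | hji := eq_or_ne j i
  · rwa [lp.single_apply_self]
  · rw [lp.single_apply_ne p i x hji]
    exact (V j).zero_mem

variable [Fact (1 ≤ p)]

def compress (P : lp E p →L[𝕜] lp E p) (i : ι) : E i →L[𝕜] E i :=
  evalCLM 𝕜 E p i ∘L P ∘L singleContinuousLinearMap 𝕜 E p i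

theorem compress_apply (P : lp E p →L[𝕜] lp E p) (i : ι) (x : E i) :
    compress P i x = P (lp.single p i x) i :=
  rfl

theorem norm_compress_le (P : lp E p →L[𝕜] lp E p) (i : ι) : ‖compress P i‖ ≤ ‖P‖ := by
  have hp : 0 < p := zero_lt_one.trans_le Fact.out
  refine ContinuousLinearMap.opNorm_le_bound _ (norm_nonneg P) fun x => ?_
  calc ‖compress P i x‖ ≤ ‖P (lp.single p i x)‖ := norm_apply_le_norm hp.ne' _ i
    _ ≤ ‖P‖ * ‖lp.single p i x‖ := P.le_opNorm _
    _ = ‖P‖ * ‖x‖ := by rw [lp.norm_single hp]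

theorem isProj_compress {P : lp E p →L[𝕜] lp E p} (hP : LinearMap.IsProj (piSubmodule p V) P)
    (i : ι) : LinearMap.IsProj (V i) (compress P i) where
  map_mem x := mem_piSubmodule.1 (hP.map_mem _) i
  map_id x hx := by
    rw [compress_apply, hP.map_id _ (single_mem_piSubmodule hx), lp.single_apply_self]

end Family

section Amplification

variable {E F : Type*} [NormedAddCommGroup E] [NormedSpace 𝕜 E] [NormedAddCommGroup F]
  [NormedSpace 𝕜 F]

def amplify (p : ℝ≥0∞) (a : E →L[𝕜] F) :
    lp (fun _ : ι => E) p →ₗ[𝕜] lp (fun _ : ι => F) p where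
  toFun ξ := ⟨fun i => a (ξ i), ((lp.memℓp ξ).norm.const_mul ‖a‖).mono fun i => a.le_opNorm _⟩
  map_add' ξ η := by ext i; exact map_add a (ξ i) (η i)
  map_smul' c ξ := by ext; simp

@[simp]
theorem amplify_apply (a : E →L[𝕜] F) (ξ : lp (fun _ : ι => E) p) (i : ι) :
    amplify p a ξ i = a (ξ i) :=
  rfl

theorem mem_invtSubmodule_amplify_iff {a : E →L[𝕜] E}
    {U : Submodule 𝕜 (lp (fun _ : ι => E) p)} :
    U ∈ Module.End.invtSubmodule (amplify p a) ↔
      ∀ ξ ∈ U, ∀ η : lp (fun _ : ι => E) p, (∀ i, η i = a (ξ i)) → η ∈ U := by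
  refine ⟨fun hU ξ hξ η hη => ?_, fun hU ξ hξ => hU ξ hξ _ fun _ => rfl⟩
  obtain rfl : η = amplify p a ξ := lp.ext (funext hη)
  exact hU hξ

theorem piSubmodule_mem_invtSubmodule_amplify {a : E →L[𝕜] E} {V : ι → Submodule 𝕜 E}
    (hV : ∀ i, ∀ x ∈ V i, a x ∈ V i) :
    piSubmodule p V ∈ Module.End.invtSubmodule (amplify p a) :=
  fun _ hξ => mem_piSubmodule.2 fun i => hV i _ (mem_piSubmodule.1 hξ i)

variable [DecidableEq ι]

theorem amplify_single (a : E →L[𝕜] F) (i : ι) (x : E) :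
    amplify p a (lp.single p i x) = lp.single p i (a x) := by
  ext j
  obtain rfl | hji := eq_or_ne j i
  · simp only [amplify_apply, lp.single_apply_self]
  · simp only [amplify_apply, lp.single_apply_ne p i _ hji, map_zero]

theorem commute_compress [Fact (1 ≤ p)] {a : E →L[𝕜] E}
    {P : lp (fun _ : ι => E) p →L[𝕜] lp (fun _ : ι => E) p}
    (h : Commute (P : lp (fun _ : ι => E) p →ₗ[𝕜] lp (fun _ : ι => E) p) (amplify p a))
    (i : ι) : Commute a (compress P i) := by
  ext x
  change a (P (lp.single p i x) i) = P (lp.single p i (a x)) i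
  rw [← amplify_single, ← amplify_apply (p := p) a]
  exact congrArg (· i) (LinearMap.congr_fun h.eq (lp.single p i x)).symm

end Amplification

end lp

end

theorem projection_constant_of_complete_reduction_general
    {H : Type*} [NormedAddCommGroup H] [InnerProductSpace ℂ H] [CompleteSpace H]
    (A : Subalgebra ℂ (H →L[ℂ] H))
    (hred : ∀ V : Submodule ℂ (lp (fun _ : ℕ => H) 2), IsClosed (V : Set (lp (fun _ : ℕ => H) 2)) →
      (∀ a ∈ A, ∀ ξ ∈ V, ∀ η : lp (fun _ : ℕ => H) 2, (∀ i, η i = a (ξ i)) → η ∈ V) →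
      ∃ W : Submodule ℂ (lp (fun _ : ℕ => H) 2), IsClosed (W : Set (lp (fun _ : ℕ => H) 2)) ∧
        (∀ a ∈ A, ∀ ξ ∈ W, ∀ η : lp (fun _ : ℕ => H) 2, (∀ i, η i = a (ξ i)) → η ∈ W) ∧
        V ⊓ W = ⊥ ∧ V ⊔ W = ⊤) :
    ∃ K : ℝ, 1 ≤ K ∧ ∀ V : Submodule ℂ H, IsClosed (V : Set H) →
      (∀ a ∈ A, ∀ x ∈ V, a x ∈ V) →
      ∃ p : H →L[ℂ] H, IsIdempotentElem p ∧ (∀ x : H, p x ∈ V) ∧ (∀ x ∈ V, p x = x) ∧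
        (∀ a ∈ A, Commute a p) ∧ ‖p‖ ≤ K := by
  by_contra! hbad
  choose V hVc hVinv hVbad using fun n : ℕ => hbad (n + 1) (by simp)
  set 𝒱 := lp.piSubmodule 2 V
  have h𝒱inv (a) (ha : a ∈ A) : 𝒱 ∈ Module.End.invtSubmodule (lp.amplify 2 a) :=
    lp.piSubmodule_mem_invtSubmodule_amplify (hVinv · a ha)
  have h𝒱c : IsClosed (𝒱 : Set (lp (fun _ : ℕ => H) 2)) := lp.isClosed_piSubmodule hVc
  obtain ⟨W, hWc, hWinv, hbot, htop⟩ :=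
    hred 𝒱 h𝒱c fun a ha => lp.mem_invtSubmodule_amplify_iff.1 (h𝒱inv a ha)
  have hcompl : 𝒱.IsTopCompl W := Submodule.IsCompl.isTopCompl_of_isClosed
    ⟨disjoint_iff.2 hbot, codisjoint_iff.2 htop⟩ h𝒱c hWc
  set P := 𝒱.projectionL W hcompl
  have hPcomm (a) (ha : a ∈ A) :
      Commute (P : lp (fun _ : ℕ => H) 2 →ₗ[ℂ] lp (fun _ : ℕ => H) 2) (lp.amplify 2 a) :=
    Submodule.commute_projectionL_of_mem_invtSubmodule hcompl (h𝒱inv a ha)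
      (lp.mem_invtSubmodule_amplify_iff.2 (hWinv a ha))
  obtain ⟨n, hn⟩ := exists_nat_ge ‖P‖
  have hproj := lp.isProj_compress (Submodule.isProj_projectionL hcompl) n
  refine (hVbad n (lp.compress P n) ?_ hproj.map_mem hproj.map_id
    fun a ha => lp.commute_compress (hPcomm a ha) n).not_ge ?_
  · exact ContinuousLinearMap.ext fun x => hproj.map_id _ (hproj.map_mem x)
  · calc ‖lp.compress P n‖ ≤ ‖P‖ := lp.norm_compress_le P n
      _ ≤ n + 1 := by linarith

/-- if the infinite amplification `H^(∞) = H ⊗ ℓ²` has the reduction property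
as an `A`-module (invariance being the diagonal action), then there is a uniform projection
constant `K ≥ 1`: every closed `A`-submodule of `H` is the range of a module projection in
the commutant of `A` of norm at most `K`. -/
theorem projection_constant_of_complete_reduction
    {H : Type*} [NormedAddCommGroup H] [InnerProductSpace ℂ H] [CompleteSpace H]
    (A : Subalgebra ℂ (H →L[ℂ] H)) (hA : IsClosed (A : Set (H →L[ℂ] H)))
    (hred : ∀ V : Submodule ℂ (lp (fun _ : ℕ => H) 2), IsClosed (V : Set (lp (fun _ : ℕ => H) 2)) →
      (∀ a ∈ A, ∀ ξ ∈ V, ∀ η : lp (fun _ : ℕ => H) 2, (∀ i, η i = a (ξ i)) → η ∈ V) →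
      ∃ W : Submodule ℂ (lp (fun _ : ℕ => H) 2), IsClosed (W : Set (lp (fun _ : ℕ => H) 2)) ∧
        (∀ a ∈ A, ∀ ξ ∈ W, ∀ η : lp (fun _ : ℕ => H) 2, (∀ i, η i = a (ξ i)) → η ∈ W) ∧
        V ⊓ W = ⊥ ∧ V ⊔ W = ⊤) :
    ∃ K : ℝ, 1 ≤ K ∧ ∀ V : Submodule ℂ H, IsClosed (V : Set H) →
      (∀ a ∈ A, ∀ x ∈ V, a x ∈ V) →
      ∃ p : H →L[ℂ] H, IsIdempotentElem p ∧ (∀ x : H, p x ∈ V) ∧ (∀ x ∈ V, p x = x) ∧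
        (∀ a ∈ A, Commute a p) ∧ ‖p‖ ≤ K :=
  projection_constant_of_complete_reduction_general A hred
end

section
/- An operator algebra A has the total reduction property if and only if for every continuous representation θ : A → B(H), every continuous derivation δ : A → B(H) (with respect to the bimodule structure a·T·b = θ(a)Tθ(b)) is inner, i.e. there exists T ∈ B(H) with δ(a) = θ(a)T − Tθ(a) for all a. -/
/-!
If `A` has total reduction and `δ` is a `θ`-derivation, then `a ↦ [[θ a, δ a], [0, θ a]]` is a
representation on `H ⊕ H` leaving `H ⊕ 0` invariant. An invariant closed complement of `H ⊕ 0` is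
the graph `{(S u, u)}` of a bounded operator `S`, and its invariance says that `δ` is the inner
derivation of `-S`.

Conversely, let `V` be invariant and `P` the orthogonal projection onto `V`. Every `θ a` is upper
triangular for `H = V ⊕ Vᗮ`; its diagonal part is again a representation, and its corner
`a ↦ P θ(a) (1 - P)` is a derivation for it. If that corner is the inner derivation of `T`, then
`P + P T (1 - P)` is an idempotent with range `V` commuting with `θ`, so its kernel is an invariant
closed complement of `V`.
-/

universe u

open scoped ENNReal

theorem one_sub_mul_mul_one_sub_of_mul_mul_self {R : Type*} [Ring R] {p x : R}
    (hx : p * x * p = x * p) : (1 - p) * x * (1 - p) = (1 - p) * x := by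
  rw [mul_sub, mul_one, sub_eq_self, sub_mul, one_mul, sub_mul, hx, sub_self]

theorem corner_mul_of_mul_mul_self {R : Type*} [Ring R] {p x y : R} (hx : p * x * p = x * p)
    (hy : p * y * p = y * p) :
    p * (x * y) * (1 - p) = x * (p * y * (1 - p)) + p * x * (1 - p) * y :=
  calc p * (x * y) * (1 - p) = p * x * p * y * (1 - p) + p * x * ((1 - p) * y * (1 - p)) := by
        noncomm_ring
    _ = _ := by rw [hx, one_sub_mul_mul_one_sub_of_mul_mul_self hy]; noncomm_ring

namespace IsIdempotentElem

variable {R : Type*} [Ring R] {p x y t : R}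

theorem corner_mul_corner (hp : IsIdempotentElem p) :
    p * x * (1 - p) * (p * y * (1 - p)) = 0 := by
  simp only [← mul_assoc]
  rw [mul_assoc (p * x), hp.one_sub_mul_self, mul_zero, zero_mul, zero_mul]

theorem diag_mul (hp : IsIdempotentElem p) (hx : p * x * p = x * p) (hy : p * y * p = y * p) :
    x * y - p * (x * y) * (1 - p) = (x - p * x * (1 - p)) * (y - p * y * (1 - p)) := by
  have hNN : p * x * (1 - p) * (p * y * (1 - p)) = 0 := hp.corner_mul_corner
  rw [corner_mul_of_mul_mul_self hx hy]
  generalize p * x * (1 - p) = nx at *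
  generalize p * y * (1 - p) = ny at *
  rw [show (x - nx) * (y - ny) = x * y - x * ny - nx * y + nx * ny by noncomm_ring, hNN]
  abel

theorem corner_mul (hp : IsIdempotentElem p) (hx : p * x * p = x * p)
    (hy : p * y * p = y * p) :
    p * (x * y) * (1 - p) =
      (x - p * x * (1 - p)) * (p * y * (1 - p)) + p * x * (1 - p) * (y - p * y * (1 - p)) := by
  have hNN : p * x * (1 - p) * (p * y * (1 - p)) = 0 := hp.corner_mul_corner
  rw [corner_mul_of_mul_mul_self hx hy]
  generalize p * x * (1 - p) = nx at *
  generalize p * y * (1 - p) = ny at *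
  rw [show (x - nx) * ny + nx * (y - ny) = x * ny + nx * y - nx * ny - nx * ny by noncomm_ring,
    hNN]
  abel

theorem commute_add_corner_of_corner_eq (hp : IsIdempotentElem p) (hx : p * x * p = x * p)
    (ht : p * x * (1 - p) = (x - p * x * (1 - p)) * t - t * (x - p * x * (1 - p))) :
    Commute (p + p * t * (1 - p)) x := by
  have hpD : p * (x - p * x * (1 - p)) = p * x * p := by
    rw [mul_sub, ← mul_assoc, ← mul_assoc, hp.eq]; noncomm_ring
  have hDq : (x - p * x * (1 - p)) * (1 - p) = (1 - p) * x := by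
    rw [← one_sub_mul_mul_one_sub_of_mul_mul_self hx, sub_mul, mul_assoc _ (1 - p),
      hp.one_sub.eq]
    noncomm_ring
  have ht' : p * x * (1 - p) = p * x * p * t * (1 - p) - p * t * ((1 - p) * x) :=
    calc p * x * (1 - p) = p * (p * x * (1 - p)) * (1 - p) := by
          rw [show p * (p * x * (1 - p)) * (1 - p) = p * p * x * ((1 - p) * (1 - p)) by
            noncomm_ring, hp.eq, hp.one_sub.eq]
      _ = p * (x - p * x * (1 - p)) * t * (1 - p)
            - p * t * ((x - p * x * (1 - p)) * (1 - p)) := by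
          conv_lhs => rw [ht]
          noncomm_ring
      _ = _ := by rw [hpD, hDq]
  calc (p + p * t * (1 - p)) * x = p * x * p + p * x * (1 - p) + p * t * ((1 - p) * x) := by
        noncomm_ring
    _ = p * x * p + p * x * p * t * (1 - p) := by rw [ht']; abel
    _ = x * (p + p * t * (1 - p)) := by
        rw [mul_add, ← hx, show x * (p * t * (1 - p)) = x * p * t * (1 - p) by noncomm_ring, ← hx]

theorem add_corner_mul_self (hp : IsIdempotentElem p) :
    (p + p * t * (1 - p)) * p = p := by
  rw [add_mul, hp.eq, mul_assoc, hp.one_sub_mul_self, mul_zero, add_zero]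

theorem mul_add_corner (hp : IsIdempotentElem p) :
    p * (p + p * t * (1 - p)) = p + p * t * (1 - p) := by
  rw [mul_add, hp.eq, ← mul_assoc, ← mul_assoc, hp.eq]

theorem add_corner (hp : IsIdempotentElem p) :
    IsIdempotentElem (p + p * t * (1 - p)) := by
  rw [IsIdempotentElem, mul_add, hp.add_corner_mul_self, ← mul_assoc, ← mul_assoc,
    hp.add_corner_mul_self]

end IsIdempotentElem

namespace AlgHom

variable {𝕜 A R : Type*} [CommSemiring 𝕜] [Semiring A] [Algebra 𝕜 A] [Ring R] [Algebra 𝕜 R]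

def peirceCorner (θ : A →ₐ[𝕜] R) (p : R) : A →ₗ[𝕜] R :=
  LinearMap.mulLeftRight 𝕜 (p, 1 - p) ∘ₗ θ.toLinearMap

@[simp]
theorem peirceCorner_apply (θ : A →ₐ[𝕜] R) (p : R) (a : A) :
    θ.peirceCorner p a = p * θ a * (1 - p) := rfl

/-- When `p * x * p = x * p`, the block-diagonal part `p x p + (1 - p) x (1 - p)` of `x` equals
`x - p x (1 - p)`. -/
def peirceDiag (θ : A →ₐ[𝕜] R) {p : R} (hp : IsIdempotentElem p)
    (hθ : ∀ a, p * θ a * p = θ a * p) : A →ₐ[𝕜] R :=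
  AlgHom.ofLinearMap (θ.toLinearMap - θ.peirceCorner p)
    (by simp [hp.mul_one_sub_self])
    (fun a b => by simp [map_mul, hp.diag_mul (hθ a) (hθ b)])

@[simp]
theorem peirceDiag_apply (θ : A →ₐ[𝕜] R) {p : R} (hp : IsIdempotentElem p)
    (hθ : ∀ a, p * θ a * p = θ a * p) (a : A) :
    θ.peirceDiag hp hθ a = θ a - p * θ a * (1 - p) := rfl

theorem peirceCorner_map_mul (θ : A →ₐ[𝕜] R) {p : R} (hp : IsIdempotentElem p)
    (hθ : ∀ a, p * θ a * p = θ a * p) (a b : A) :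
    θ.peirceCorner p (a * b) =
      θ.peirceDiag hp hθ a * θ.peirceCorner p b + θ.peirceCorner p a * θ.peirceDiag hp hθ b := by
  simp only [peirceCorner_apply, peirceDiag_apply, map_mul]
  exact hp.corner_mul (hθ a) (hθ b)

variable [TopologicalSpace A] [TopologicalSpace R] [IsTopologicalRing R] {θ : A →ₐ[𝕜] R}

theorem continuous_peirceCorner (hθc : Continuous θ) (p : R) : Continuous (θ.peirceCorner p) :=
  (continuous_const.mul hθc).mul continuous_const

theorem continuous_peirceDiag (hθc : Continuous θ) {p : R} (hp : IsIdempotentElem p)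
    (hθ : ∀ a, p * θ a * p = θ a * p) : Continuous (θ.peirceDiag hp hθ) :=
  hθc.sub (continuous_peirceCorner hθc p)

end AlgHom

theorem ContinuousLinearMap.range_eq_of_mul_eq {R M : Type*} [Semiring R] [TopologicalSpace M]
    [AddCommMonoid M] [Module R M] {f g : M →L[R] M} (hfg : f * g = g) (hgf : g * f = f) :
    f.range = g.range :=
  le_antisymm (hgf ▸ LinearMap.range_comp_le_range (f : M →ₗ[R] M) (g : M →ₗ[R] M))
    (hfg ▸ LinearMap.range_comp_le_range (g : M →ₗ[R] M) (f : M →ₗ[R] M))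

theorem ContinuousLinearMap.exists_isClosed_invariant_compl_of_commute {R E ι : Type*} [Ring R]
    [TopologicalSpace E] [AddCommGroup E] [Module R E] [T1Space E] (θ : ι → E →L[R] E)
    {e : E →L[R] E} (he : IsIdempotentElem e) (hcomm : ∀ i, Commute e (θ i)) :
    ∃ W : Submodule R E, IsClosed (W : Set E) ∧ (∀ i, ∀ x ∈ W, θ i x ∈ W) ∧
      e.range ⊓ W = ⊥ ∧ e.range ⊔ W = ⊤ :=
  have hcompl := LinearMap.IsIdempotentElem.isCompl
    (ContinuousLinearMap.IsIdempotentElem.toLinearMap he)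
  ⟨e.ker, ContinuousLinearMap.isClosed_ker e,
    fun i _ hx => (ContinuousLinearMap.IsIdempotentElem.commute_iff he |>.mp (hcomm i)).2 hx,
    hcompl.inf_eq_bot, hcompl.sup_eq_top⟩

theorem map_one_eq_zero_of_leibniz {𝕜 A R : Type*} [CommSemiring 𝕜] [Semiring A] [Algebra 𝕜 A]
    [Ring R] [Algebra 𝕜 R] {θ : A →ₐ[𝕜] R} {δ : A →ₗ[𝕜] R}
    (hδ : ∀ a b, δ (a * b) = θ a * δ b + δ a * θ b) : δ 1 = 0 := by
  simpa using hδ 1 1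

section Triangular

variable {𝕜 A E : Type*} [NontriviallyNormedField 𝕜] [Semiring A] [Algebra 𝕜 A]
  [NormedAddCommGroup E] [NormedSpace 𝕜 E]

def triangularAlgHom (θ : A →ₐ[𝕜] (E →L[𝕜] E)) (δ : A →ₗ[𝕜] (E →L[𝕜] E))
    (hδ : ∀ a b, δ (a * b) = θ a * δ b + δ a * θ b) : A →ₐ[𝕜] (E × E →L[𝕜] E × E) :=
  AlgHom.ofLinearMap
    { toFun a := (θ a).prodMap (θ a) + .inl 𝕜 E E ∘L δ a ∘L .snd 𝕜 E E
      map_add' a b := by ext <;> simp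
      map_smul' c a := by ext <;> simp }
    (by ext <;> simp [map_one_eq_zero_of_leibniz hδ])
    (fun a b => by ext <;> simp [hδ])

@[simp]
theorem triangularAlgHom_apply (θ : A →ₐ[𝕜] (E →L[𝕜] E)) (δ : A →ₗ[𝕜] (E →L[𝕜] E))
    (hδ : ∀ a b, δ (a * b) = θ a * δ b + δ a * θ b) (a : A) (z : E × E) :
    triangularAlgHom θ δ hδ a z = (θ a z.1 + δ a z.2, θ a z.2) := by
  ext <;> simp [triangularAlgHom]

theorem continuous_triangularAlgHom [TopologicalSpace A] {θ : A →ₐ[𝕜] (E →L[𝕜] E)}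
    {δ : A →ₗ[𝕜] (E →L[𝕜] E)} (hδ : ∀ a b, δ (a * b) = θ a * δ b + δ a * θ b)
    (hθc : Continuous θ) (hδc : Continuous δ) : Continuous (triangularAlgHom θ δ hδ) :=
  ((ContinuousLinearMap.prodMapL 𝕜 E E E E).continuous.comp (hθc.prodMk hθc)).add
    (continuous_const.clm_comp (hδc.clm_comp continuous_const))

end Triangular

theorem exists_eq_commutator_of_invariant_isCompl_ker_snd {𝕜 E ι : Type*}
    [NontriviallyNormedField 𝕜] [NormedAddCommGroup E] [NormedSpace 𝕜 E] [CompleteSpace E]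
    {p : ℝ≥0∞} [Fact (1 ≤ p)] (θ δ : ι → E →L[𝕜] E)
    (W : Submodule 𝕜 (WithLp p (E × E))) (hW : IsClosed (W : Set (WithLp p (E × E))))
    (hWinv : ∀ i, ∀ z ∈ W, WithLp.toLp p (θ i z.fst + δ i z.snd, θ i z.snd) ∈ W)
    (hcompl : IsCompl (WithLp.sndL p 𝕜 E E).ker W) :
    ∃ T : E →L[𝕜] E, ∀ i, δ i = θ i * T - T * θ i := by
  set V := (WithLp.sndL p 𝕜 E E).ker
  have h : W.IsTopCompl V :=
    Submodule.IsCompl.isTopCompl_of_isClosed hcompl.symm hW (ContinuousLinearMap.isClosed_ker _)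
  let j : E →L[𝕜] WithLp p (E × E) :=
    (WithLp.prodContinuousLinearEquiv p 𝕜 E E).symm ∘L ContinuousLinearMap.inr 𝕜 E E
  let S : E →L[𝕜] E := WithLp.fstL p 𝕜 E E ∘L W.projectionL V h ∘L j
  have hgraph : ∀ u, WithLp.toLp p (S u, u) ∈ W := fun u => by
    have hV : j u - W.projectionL V h (j u) ∈ V :=
      Submodule.projectionL_eq_self_sub_projectionL h (j u) ▸ Submodule.projectionL_apply_mem _ _
    have hsnd : u = (W.projectionL V h (j u)).snd := by simpa [V, j, sub_eq_zero] using hV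
    have hG : WithLp.toLp p (S u, u) = W.projectionL V h (j u) :=
      WithLp.ofLp_injective p (Prod.ext rfl hsnd)
    exact hG ▸ Submodule.projectionL_apply_mem h (j u)
  refine ⟨-S, fun i => ContinuousLinearMap.ext fun u => ?_⟩
  have hdiff : WithLp.toLp p (θ i (S u) + δ i u - S (θ i u), 0) ∈ V ⊓ W := by
    refine ⟨by simp [V], ?_⟩
    simpa [← WithLp.toLp_sub] using W.sub_mem (hWinv i _ (hgraph u)) (hgraph (θ i u))
  rw [hcompl.inf_eq_bot, Submodule.mem_bot] at hdiff
  have := congrArg WithLp.fst hdiff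
  simp only [WithLp.toLp_fst, WithLp.zero_fst] at this
  simp only [sub_apply, mul_apply_eq_comp, neg_apply, map_neg]
  linear_combination (norm := abel) this

theorem totalReduction_iff_derivations_inner_general
    {A : Type u} [NormedRing A] [NormedAlgebra ℂ A] :
    (∀ (H : Type u) [NormedAddCommGroup H] [InnerProductSpace ℂ H] [CompleteSpace H],
      ∀ θ : A →ₐ[ℂ] (H →L[ℂ] H), Continuous (⇑θ) →
      ∀ V : Submodule ℂ H, IsClosed (V : Set H) → (∀ a : A, ∀ x ∈ V, θ a x ∈ V) →
      ∃ W : Submodule ℂ H, IsClosed (W : Set H) ∧ (∀ a : A, ∀ x ∈ W, θ a x ∈ W) ∧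
        V ⊓ W = ⊥ ∧ V ⊔ W = ⊤)
    ↔
    (∀ (H : Type u) [NormedAddCommGroup H] [InnerProductSpace ℂ H] [CompleteSpace H],
      ∀ θ : A →ₐ[ℂ] (H →L[ℂ] H), Continuous (⇑θ) →
      ∀ δ : A →ₗ[ℂ] (H →L[ℂ] H), Continuous (⇑δ) →
      (∀ a b : A, δ (a * b) = θ a * δ b + δ a * θ b) →
      ∃ T : H →L[ℂ] H, ∀ a : A, δ a = θ a * T - T * θ a) := by
  constructor
  · intro hTR H _ _ _ θ hθ δ hδ hder
    let e := (WithLp.prodContinuousLinearEquiv 2 ℂ H H).symm.conjContinuousAlgEquiv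
    let ρ := e.toAlgEquiv.toAlgHom.comp (triangularAlgHom θ δ hder)
    have hρ : Continuous ρ := e.continuous.comp (continuous_triangularAlgHom hder hθ hδ)
    obtain ⟨W, hWc, hWinv, hinf, hsup⟩ := hTR (WithLp 2 (H × H)) ρ hρ
      (WithLp.sndL 2 ℂ H H).ker (ContinuousLinearMap.isClosed_ker _)
      (fun a z hz => by simp_all [ρ, e])
    exact exists_eq_commutator_of_invariant_isCompl_ker_snd θ δ W hWc
      (fun a z hz => by simpa [ρ, e] using hWinv a z hz) (.of_eq hinf hsup)
  · intro hinner H _ _ _ θ hθ V hVc hVinv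
    have : CompleteSpace V := hVc.completeSpace_coe
    set P := V.starProjection
    have hP : IsIdempotentElem P := V.isIdempotentElem_starProjection
    have hθP : ∀ a, P * θ a * P = θ a * P := fun a =>
      (ContinuousLinearMap.IsIdempotentElem.range_mem_invtSubmodule_iff hP).mp
        (by rw [V.range_starProjection]; exact fun x hx => hVinv a x hx)
    obtain ⟨T, hT⟩ := hinner H (θ.peirceDiag hP hθP) (θ.continuous_peirceDiag hθ hP hθP)
      (θ.peirceCorner P) (θ.continuous_peirceCorner hθ P) (θ.peirceCorner_map_mul hP hθP)
    rw [← V.range_starProjection, ← ContinuousLinearMap.range_eq_of_mul_eq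
      hP.add_corner_mul_self (hP.mul_add_corner (t := T))]
    exact ContinuousLinearMap.exists_isClosed_invariant_compl_of_commute θ hP.add_corner
      fun a => hP.commute_add_corner_of_corner_eq (hθP a) (hT a)

/-- an operator algebra (here, a Banach algebra) `A` has the total reduction
property iff for every continuous representation `θ : A → B(H)` every continuous derivation
`δ : A → B(H)` (for the bimodule action `a·T·b = θ(a) T θ(b)`) is inner. -/
theorem totalReduction_iff_derivations_inner
    {A : Type u} [NormedRing A] [NormedAlgebra ℂ A] [CompleteSpace A] :
    (∀ (H : Type u) [NormedAddCommGroup H] [InnerProductSpace ℂ H] [CompleteSpace H],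
      ∀ θ : A →ₐ[ℂ] (H →L[ℂ] H), Continuous (⇑θ) →
      ∀ V : Submodule ℂ H, IsClosed (V : Set H) → (∀ a : A, ∀ x ∈ V, θ a x ∈ V) →
      ∃ W : Submodule ℂ H, IsClosed (W : Set H) ∧ (∀ a : A, ∀ x ∈ W, θ a x ∈ W) ∧
        V ⊓ W = ⊥ ∧ V ⊔ W = ⊤)
    ↔
    (∀ (H : Type u) [NormedAddCommGroup H] [InnerProductSpace ℂ H] [CompleteSpace H],
      ∀ θ : A →ₐ[ℂ] (H →L[ℂ] H), Continuous (⇑θ) →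
      ∀ δ : A →ₗ[ℂ] (H →L[ℂ] H), Continuous (⇑δ) →
      (∀ a b : A, δ (a * b) = θ a * δ b + δ a * θ b) →
      ∃ T : H →L[ℂ] H, ∀ a : A, δ a = θ a * T - T * θ a) :=
  totalReduction_iff_derivations_inner_general
end

section
/- Let A = Alg L be a CSL algebra (L a commutative subspace lattice) acting on a Hilbert space H. If A has the reduction property, then A is self-adjoint. -/
/-- a CSL algebra `A = Alg L` (the lattice `L` consists of closed subspaces
whose orthogonal projections — self-adjoint idempotents with the corresponding ranges —
commute pairwise) with the reduction property is self-adjoint. -/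
theorem csl_reduction_algebra_selfAdjoint
    {H : Type*} [NormedAddCommGroup H] [InnerProductSpace ℂ H] [CompleteSpace H]
    (L : Set (Submodule ℂ H))
    (hLc : ∀ V ∈ L, IsClosed (V : Set H))
    (P : Submodule ℂ H → (H →L[ℂ] H))
    (hP : ∀ V ∈ L, IsIdempotentElem (P V) ∧ IsSelfAdjoint (P V) ∧
      (∀ x : H, P V x ∈ V) ∧ (∀ x ∈ V, P V x = x))
    (hPcomm : ∀ V ∈ L, ∀ W ∈ L, Commute (P V) (P W))
    (hred : ∀ V : Submodule ℂ H, IsClosed (V : Set H) →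
      (∀ a : H →L[ℂ] H, (∀ U ∈ L, ∀ x ∈ U, a x ∈ U) → ∀ x ∈ V, a x ∈ V) →
      ∃ W : Submodule ℂ H, IsClosed (W : Set H) ∧
        (∀ a : H →L[ℂ] H, (∀ U ∈ L, ∀ x ∈ U, a x ∈ U) → ∀ x ∈ W, a x ∈ W) ∧
        V ⊓ W = ⊥ ∧ V ⊔ W = ⊤) :
    ∀ a : H →L[ℂ] H, (∀ U ∈ L, ∀ x ∈ U, a x ∈ U) →
      (∀ U ∈ L, ∀ x ∈ U, (star a) x ∈ U) := by
  intro a ha U hU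
  obtain ⟨hidem, hsa, hmem, hfix⟩ := hP U hU
  -- `P U` belongs to the algebra: it leaves every `V ∈ L` invariant.
  have hPUalg : ∀ V ∈ L, ∀ x ∈ V, P U x ∈ V := by
    intro V hV x hxV
    have h1 : P U x = P V (P U x) := by
      have := congrArg (fun b : H →L[ℂ] H => b x) (hPcomm U hU V hV)
      simp only [ContinuousLinearMap.mul_apply] at this
      rw [(hP V hV).2.2.2 x hxV] at this
      exact this
    rw [h1]; exact (hP V hV).2.2.1 _
  -- `U` is invariant under the whole algebra (trivially).
  have hUinv : ∀ b : H →L[ℂ] H, (∀ V ∈ L, ∀ x ∈ V, b x ∈ V) → ∀ x ∈ U, b x ∈ U :=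
    fun b hb x hx => hb U hU x hx
  obtain ⟨W, hWc, hWinv, hbot, htop⟩ := hred U (hLc U hU) hUinv
  -- `W ⊆ ker (P U)`.
  have hWker : ∀ w ∈ W, P U w = 0 := by
    intro w hw
    have h1 : P U w ∈ W := hWinv (P U) hPUalg w hw
    have h2 : P U w ∈ U ⊓ W := ⟨hmem w, h1⟩
    rw [hbot] at h2
    exact h2
  -- Operator identity: `P U * a = a * P U`.
  have hcomm : P U * a = a * P U := by
    ext y
    have hy : y ∈ U ⊔ W := by rw [htop]; trivial
    obtain ⟨u, hu, w, hw, rfl⟩ := Submodule.mem_sup.mp hy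
    simp only [ContinuousLinearMap.mul_apply, map_add]
    rw [hfix u hu, hWker w hw, map_zero, add_zero,
      hfix (a u) (ha U hU u hu), hWker (a w) (hWinv a ha w hw), add_zero]
  -- Take stars: `P U * star a = star a * P U`.
  have hcomm' : P U * star a = star a * P U := by
    have := congrArg star hcomm
    rw [star_mul, star_mul, hsa.star_eq] at this
    exact this.symm
  intro x hx
  have h1 : star a x = star a (P U x) := by rw [hfix x hx]
  have h2 : star a (P U x) = P U (star a x) := by
    have := congrArg (fun b : H →L[ℂ] H => b x) hcomm'
    simp only [ContinuousLinearMap.mul_apply] at this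
    exact this.symm
  rw [h1, h2]
  exact hmem _
end

section
/- Let Y be a finite-dimensional Hilbert space with complementary subspaces Y₁ and Y₂ (Y = Y₁ ⊕ Y₂ as a linear direct sum), and let p be the projection onto Y₁ along Y₂. Then for every subspace V ⊆ Y there exists a linear projection q : Y → Y with range V such that (1−p)qp = 0, i.e. q maps Y₁ into Y₁. -/
/-!
Write `V₁ = V ⊓ Y₁`. Choose a complement `C` of `V₁` inside `Y₁` and a complement `Z` of
`V ⊔ Y₁` in the whole space; then `W = C ⊔ Z` is a complement of `V` with
`Y₁ = (V ⊓ Y₁) ⊔ (W ⊓ Y₁)`. The projection onto `V` along `W` splits each `y ∈ Y₁` as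
`v + c` with `v ∈ V₁`, `c ∈ C`, and sends it to `v ∈ Y₁`.
-/

theorem IsModularLattice.exists_isCompl_inf_sup_inf_eq {α : Type*} [Lattice α] [BoundedOrder α]
    [IsModularLattice α] [ComplementedLattice α] (a b : α) :
    ∃ c, IsCompl a c ∧ a ⊓ b ⊔ c ⊓ b = b := by
  obtain ⟨d, hd_disj, hd_sup⟩ := exists_disjoint_and_sup_eq (inf_le_right : a ⊓ b ≤ b)
  obtain ⟨z, hz⟩ := exists_isCompl (a ⊔ b)
  have hd_le : d ≤ b := hd_sup ▸ le_sup_right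
  have had : Disjoint a d := by
    rw [disjoint_iff, ← inf_eq_right.mpr hd_le, ← inf_assoc]
    exact hd_disj.eq_bot
  have hsup : a ⊔ d = a ⊔ b := by
    rw [← hd_sup, ← sup_assoc, sup_inf_self]
  refine ⟨d ⊔ z, Disjoint.isCompl_sup_right_of_isCompl_sup_left had (hsup ▸ hz), ?_⟩
  refine le_antisymm (sup_le inf_le_right inf_le_right) ?_
  calc b = a ⊓ b ⊔ d := hd_sup.symm
    _ ≤ a ⊓ b ⊔ (d ⊔ z) ⊓ b := sup_le_sup_left (le_inf le_sup_left hd_le) _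

namespace Submodule

variable {R M : Type*} [Ring R] [AddCommGroup M] [Module R M]

theorem projection_apply_mem_of_inf_sup_inf_eq {p q r : Submodule R M} (hpq : IsCompl p q)
    (hr : p ⊓ r ⊔ q ⊓ r = r) {x : M} (hx : x ∈ r) : p.projection q hpq x ∈ r := by
  rw [← hr] at hx
  obtain ⟨u, hu, v, hv, rfl⟩ := mem_sup.mp hx
  rw [map_add, projection_apply_of_mem_left hpq hu.1, projection_apply_of_mem_right hpq hv.1,
    add_zero]
  exact hu.2

theorem exists_isIdempotentElem_range_eq_and_mapsTo {K : Type*} [DivisionRing K] [Module K M]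
    (V U : Submodule K M) :
    ∃ q : Module.End K M, IsIdempotentElem q ∧ LinearMap.range q = V ∧ Set.MapsTo q U U := by
  obtain ⟨W, hVW, hU⟩ := IsModularLattice.exists_isCompl_inf_sup_inf_eq V U
  exact ⟨V.projection W hVW, isIdempotentElem_projection hVW, range_projection hVW,
    fun _ ↦ projection_apply_mem_of_inf_sup_inf_eq hVW hU⟩

end Submodule

theorem projection_preserving_summand_general
    {Y : Type*} [NormedAddCommGroup Y] [InnerProductSpace ℂ Y]
    (Y₁ : Submodule ℂ Y)
    (p : Y →ₗ[ℂ] Y)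
    (hran : ∀ x : Y, p x ∈ Y₁) (hfix : ∀ x ∈ Y₁, p x = x)
    (V : Submodule ℂ Y) :
    ∃ q : Y →ₗ[ℂ] Y, q ∘ₗ q = q ∧ LinearMap.range q = V ∧
      ((LinearMap.id : Y →ₗ[ℂ] Y) - p) ∘ₗ (q ∘ₗ p) = 0 ∧
      (∀ x ∈ Y₁, q x ∈ Y₁) := by
  obtain ⟨q, hq, hrange, hY₁⟩ := Submodule.exists_isIdempotentElem_range_eq_and_mapsTo V Y₁
  refine ⟨q, hq.eq, hrange, ?_, fun _ hx ↦ hY₁ hx⟩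
  ext x
  simp [hfix _ (hY₁ (hran x))]

/-- in a finite-dimensional Hilbert space `Y = Y₁ ⊕ Y₂` with projection `p`
onto `Y₁` along `Y₂`, every subspace `V` is the range of a (not necessarily orthogonal)
projection `q` with `(1 - p) q p = 0`, i.e. `q` maps `Y₁` into `Y₁`. -/
theorem projection_preserving_summand
    {Y : Type*} [NormedAddCommGroup Y] [InnerProductSpace ℂ Y] [FiniteDimensional ℂ Y]
    (Y₁ Y₂ : Submodule ℂ Y) (hcompl : IsCompl Y₁ Y₂)
    (p : Y →ₗ[ℂ] Y) (hp : p ∘ₗ p = p)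
    (hran : ∀ x : Y, p x ∈ Y₁) (hfix : ∀ x ∈ Y₁, p x = x) (hker : ∀ x ∈ Y₂, p x = 0)
    (V : Submodule ℂ Y) :
    ∃ q : Y →ₗ[ℂ] Y, q ∘ₗ q = q ∧ LinearMap.range q = V ∧
      ((LinearMap.id : Y →ₗ[ℂ] Y) - p) ∘ₗ (q ∘ₗ p) = 0 ∧
      (∀ x ∈ Y₁, q x ∈ Y₁) :=
  projection_preserving_summand_general Y₁ p hran hfix V
end

section
/- Let A ⊆ B(H) be an operator algebra and suppose the closed A-submodule V ⊆ H is complemented by a closed subspace W that is invariant both under A and under the commutant A′. Then W is the unique closed A-submodule complementing V in H. -/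
/-!
Let `W'` be a closed `A`-invariant complement of `V`. Since `V` and `W'` are closed and `H` is
complete, the projection `P` onto `V` along `W'` is bounded, and it commutes with `A` because
both its range and its kernel are `A`-invariant. So `P` lies in `A′` and maps `W` into `W`;
as it also maps into `V`, it kills `W`, i.e. `W ≤ ker P = W'`. Two nested complements of the
same subspace coincide by modularity.
-/

theorem IsCompl.eq_of_le {α : Type*} [Lattice α] [BoundedOrder α] [IsModularLattice α]
    {a b c : α} (hab : IsCompl a b) (hac : IsCompl a c) (hbc : b ≤ c) : b = c :=
  eq_of_le_of_inf_le_of_sup_le hbc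
    (by rw [inf_comm, hac.inf_eq_bot, inf_comm, hab.inf_eq_bot])
    (by rw [sup_comm, hac.sup_eq_top, sup_comm, hab.sup_eq_top])

namespace Submodule.IsTopCompl

variable {R M : Type*} [Ring R] [TopologicalSpace M] [AddCommGroup M] [Module R M]
  {p q : Submodule R M}

theorem commute_projectionL (h : IsTopCompl p q) {T : M →L[R] M}
    (hp : ∀ x ∈ p, T x ∈ p) (hq : ∀ x ∈ q, T x ∈ q) : Commute (p.projectionL q h) T := by
  rw [ContinuousLinearMap.IsIdempotentElem.commute_iff (isIdempotentElem_projectionL h),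
    range_projectionL, ker_projectionL]
  exact ⟨hp, hq⟩

theorem le_right_of_disjoint_of_projectionL_mem (h : IsTopCompl p q) {r : Submodule R M}
    (hpr : p ⊓ r = ⊥) (hr : ∀ x ∈ r, p.projectionL q h x ∈ r) : r ≤ q := by
  intro x hx
  have hPx : p.projectionL q h x ∈ p ⊓ r := ⟨projectionL_apply_mem h x, hr x hx⟩
  rw [hpr, mem_bot] at hPx
  exact (projectionL_apply_eq_zero_iff h).mp hPx

end Submodule.IsTopCompl

theorem unique_complement_of_bicommutant_invariant_general
    {H : Type*} [NormedAddCommGroup H] [InnerProductSpace ℂ H] [CompleteSpace H]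
    (A : Subalgebra ℂ (H →L[ℂ] H))
    (V W : Submodule ℂ H)
    (hVc : IsClosed (V : Set H))
    (hVinv : ∀ a ∈ A, ∀ x ∈ V, a x ∈ V)
    (hWinv' : ∀ T : H →L[ℂ] H, (∀ a ∈ A, Commute T a) → ∀ x ∈ W, T x ∈ W)
    (hmeet : V ⊓ W = ⊥) (hjoin : V ⊔ W = ⊤) :
    ∀ W' : Submodule ℂ H, IsClosed (W' : Set H) → (∀ a ∈ A, ∀ x ∈ W', a x ∈ W') →
      V ⊓ W' = ⊥ → V ⊔ W' = ⊤ → W' = W := by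
  intro W' hW'c hW'inv hmeet' hjoin'
  have hcompl : IsCompl V W' := ⟨disjoint_iff.mpr hmeet', codisjoint_iff.mpr hjoin'⟩
  have htop : Submodule.IsTopCompl V W' := Submodule.IsCompl.isTopCompl_of_isClosed hcompl hVc hW'c
  have hcomm : ∀ a ∈ A, Commute (V.projectionL W' htop) a := fun a ha =>
    htop.commute_projectionL (hVinv a ha) (hW'inv a ha)
  have hle : W ≤ W' :=
    htop.le_right_of_disjoint_of_projectionL_mem hmeet (hWinv' _ hcomm)
  exact ((IsCompl.of_eq hmeet hjoin).eq_of_le hcompl hle).symm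

/-- if a closed submodule `V` of `H` is topologically complemented by a
closed subspace `W` invariant under both `A` and the commutant `A′`, then `W` is the
unique closed `A`-submodule complementing `V`. -/
theorem unique_complement_of_bicommutant_invariant
    {H : Type*} [NormedAddCommGroup H] [InnerProductSpace ℂ H] [CompleteSpace H]
    (A : Subalgebra ℂ (H →L[ℂ] H))
    (V W : Submodule ℂ H)
    (hVc : IsClosed (V : Set H)) (hWc : IsClosed (W : Set H))
    (hVinv : ∀ a ∈ A, ∀ x ∈ V, a x ∈ V) (hWinv : ∀ a ∈ A, ∀ x ∈ W, a x ∈ W)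
    (hWinv' : ∀ T : H →L[ℂ] H, (∀ a ∈ A, Commute T a) → ∀ x ∈ W, T x ∈ W)
    (hmeet : V ⊓ W = ⊥) (hjoin : V ⊔ W = ⊤) :
    ∀ W' : Submodule ℂ H, IsClosed (W' : Set H) → (∀ a ∈ A, ∀ x ∈ W', a x ∈ W') →
      V ⊓ W' = ⊥ → V ⊔ W' = ⊤ → W' = W :=
  unique_complement_of_bicommutant_invariant_general A V W hVc hVinv hWinv' hmeet hjoin
end
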